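/- arXiv:1011.3272 — 5 statements merged into one kernel-verified Lean document; each statement's English description precedes it below -/
import Mathlib

section
/- Let C_p, C_q be complex T×N dispersion matrices satisfying the quasi-orthogonality constraint C_p^H C_q = -C_q^H C_p. Then for any complex N×1 vector h̃, the real vectors h_p and h_q of length 2T, where h_l = [Re(C_l h̃); Im(C_l h̃)], satisfy h_p^T h_q = 0. -/
/-!
Stacking real and imaginary parts turns the real inner product into the real part of the
Hermitian one: `h_pᵀ h_q = Re ((C_p h̃)ᴴ (C_q h̃)) = Re (h̃ᴴ (C_pᴴ C_q) h̃)`. The constraint says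
exactly that `C_pᴴ C_q` is skew-Hermitian, and the quadratic form of a skew-Hermitian matrix is
purely imaginary.
-/

open Matrix

/-- The real vector `[Re(C h̃); Im(C h̃)]` of length `2T`. -/
noncomputable def realChan {T N : ℕ} (C : Matrix (Fin T) (Fin N) ℂ) (h : Fin N → ℂ) :
    Fin T ⊕ Fin T → ℝ :=
  Sum.elim (fun t => ((C *ᵥ h) t).re) (fun t => ((C *ᵥ h) t).im)

namespace Matrix

variable {m n : Type*} [Fintype m] [Fintype n]

theorem star_mulVec_dotProduct_mulVec {α : Type*} [CommSemiring α] [StarRing α]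
    (A B : Matrix m n α) (v : n → α) :
    star (A *ᵥ v) ⬝ᵥ B *ᵥ v = star v ⬝ᵥ (Aᴴ * B) *ᵥ v := by
  rw [star_mulVec, dotProduct_mulVec, vecMul_vecMul, ← dotProduct_mulVec]

theorem re_star_dotProduct_mulVec_eq_zero {𝕜 : Type*} [RCLike 𝕜] {M : Matrix n n 𝕜}
    (hM : Mᴴ = -M) (v : n → 𝕜) : RCLike.re (star v ⬝ᵥ M *ᵥ v) = 0 := by
  have hconj : star (star v ⬝ᵥ M *ᵥ v) = -(star v ⬝ᵥ M *ᵥ v) := by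
    rw [← star_dotProduct_star, star_star, star_mulVec, ← dotProduct_mulVec, hM, neg_mulVec,
      dotProduct_neg]
  have hre := congrArg RCLike.re hconj
  rw [RCLike.star_def, RCLike.conj_re, map_neg] at hre
  linarith

end Matrix

theorem sumElim_re_im_dotProduct {ι : Type*} [Fintype ι] (u v : ι → ℂ) :
    Sum.elim (fun i => (u i).re) (fun i => (u i).im) ⬝ᵥ
      Sum.elim (fun i => (v i).re) (fun i => (v i).im) = (star u ⬝ᵥ v).re := by
  simp [dotProduct, Complex.re_sum, Finset.sum_add_distrib, Complex.mul_re]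

/-- If the dispersion matrices satisfy the quasi-orthogonality constraint
`Cₚᴴ C_q = -C_qᴴ Cₚ`, then for every channel vector `h̃`, the real channel
vectors `h_p` and `h_q` are orthogonal. -/
theorem stmt2 (T N : ℕ) (Cp Cq : Matrix (Fin T) (Fin N) ℂ)
    (hqoc : Cpᴴ * Cq = -(Cqᴴ * Cp)) (h : Fin N → ℂ) :
    realChan Cp h ⬝ᵥ realChan Cq h = 0 := by
  have hskew : (Cpᴴ * Cq)ᴴ = -(Cpᴴ * Cq) := by
    rw [conjTranspose_mul, conjTranspose_conjTranspose, hqoc, neg_neg]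
  rw [realChan, realChan, sumElim_re_im_dotProduct, star_mulVec_dotProduct_mulVec]
  exact re_star_dotProduct_mulVec_eq_zero hskew h
end

section
/- Let C be a complex T×N matrix of rank N with T ≥ N, and let 𝒞 = f(C) be the real N²×2TN matrix encoding the quasi-orthogonality constraint system C^H Y + Y^H C = 0 for the unknown T×N complex matrix Y (with N diagonal equations and N(N-1) off-diagonal real equation pairs). Then rank(𝒞) = N², i.e., 𝒞 has full row rank, and consequently the real solution space {Y : C^H Y + Y^H C = 0} has dimension 2TN - N². -/
open Matrix

/-- The real-linear map `Y ↦ Cᴴ Y + Yᴴ C` encoding the quasi-orthogonality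
constraint system. -/
noncomputable def qocMap {T N : ℕ} (C : Matrix (Fin T) (Fin N) ℂ) :
    Matrix (Fin T) (Fin N) ℂ →ₗ[ℝ] Matrix (Fin N) (Fin N) ℂ where
  toFun Y := Cᴴ * Y + Yᴴ * C
  map_add' Y Z := by
    simp [Matrix.conjTranspose_add, Matrix.mul_add, Matrix.add_mul]
    abel
  map_smul' r Y := by
    simp [Matrix.conjTranspose_smul, Matrix.mul_smul, Matrix.smul_mul, smul_add]

/-- `A ↦ A + Aᴴ` as a real-linear map. -/
noncomputable def addAdjMap (N : ℕ) :
    Matrix (Fin N) (Fin N) ℂ →ₗ[ℝ] Matrix (Fin N) (Fin N) ℂ where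
  toFun A := A + Aᴴ
  map_add' A B := by
    simp [Matrix.conjTranspose_add]; abel
  map_smul' r A := by
    simp [Matrix.conjTranspose_smul, smul_add]

lemma mem_range_addAdjMap {N : ℕ} (A : Matrix (Fin N) (Fin N) ℂ) :
    A ∈ LinearMap.range (addAdjMap N) ↔ Aᴴ = A := by
  constructor
  · rintro ⟨B, rfl⟩
    simp [addAdjMap, Matrix.conjTranspose_add]
    abel
  · intro h
    refine ⟨(2 : ℝ)⁻¹ • A, ?_⟩
    simp only [addAdjMap, LinearMap.coe_mk, AddHom.coe_mk, Matrix.conjTranspose_smul, star_inv₀,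
      star_ofNat, h]
    rw [← smul_add]
    norm_num
    rw [← add_smul]
    norm_num

lemma mem_ker_addAdjMap {N : ℕ} (A : Matrix (Fin N) (Fin N) ℂ) :
    A ∈ LinearMap.ker (addAdjMap N) ↔ Aᴴ = -A := by
  simp only [LinearMap.mem_ker, addAdjMap, LinearMap.coe_mk, AddHom.coe_mk]
  constructor
  · intro h; linear_combination (norm := abel) h
  · intro h; rw [h]; abel

/-- Multiplication by `i` as a real-linear equivalence on complex matrices. -/
noncomputable def mulIEquiv (N : ℕ) :
    Matrix (Fin N) (Fin N) ℂ ≃ₗ[ℝ] Matrix (Fin N) (Fin N) ℂ :=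
  (LinearEquiv.smulOfNeZero ℂ _ Complex.I Complex.I_ne_zero).restrictScalars ℝ

lemma ker_eq_map_range (N : ℕ) :
    LinearMap.ker (addAdjMap N) =
      (LinearMap.range (addAdjMap N)).map (mulIEquiv N : _ →ₗ[ℝ] _) := by
  ext A
  simp only [Submodule.mem_map, mem_ker_addAdjMap]
  constructor
  · intro h
    refine ⟨(-Complex.I) • A, ?_, ?_⟩
    · rw [mem_range_addAdjMap]
      rw [Matrix.conjTranspose_smul, h]
      simp
    · show Complex.I • (-Complex.I) • A = A
      rw [smul_smul]; simp
  · rintro ⟨B, hB, rfl⟩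
    rw [mem_range_addAdjMap] at hB
    show (Complex.I • B)ᴴ = -(Complex.I • B)
    rw [Matrix.conjTranspose_smul, hB]
    simp

lemma finrank_range_addAdjMap (N : ℕ) :
    Module.finrank ℝ (LinearMap.range (addAdjMap N)) = N ^ 2 := by
  have h1 := LinearMap.finrank_range_add_finrank_ker (addAdjMap N)
  have h2 : Module.finrank ℝ (LinearMap.ker (addAdjMap N)) =
      Module.finrank ℝ (LinearMap.range (addAdjMap N)) := by
    rw [ker_eq_map_range]
    exact LinearEquiv.finrank_map_eq (mulIEquiv N) _
  have h3 : Module.finrank ℝ (Matrix (Fin N) (Fin N) ℂ) = N * N * 2 := by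
    rw [Module.finrank_matrix, Complex.finrank_real_complex]
    simp
  rw [h2, h3] at h1
  have : Module.finrank ℝ (LinearMap.range (addAdjMap N)) = N * N := by omega
  rw [this, sq]

/-- Left multiplication by `Cᴴ` as a real-linear map. -/
noncomputable def lmulCH {T N : ℕ} (C : Matrix (Fin T) (Fin N) ℂ) :
    Matrix (Fin T) (Fin N) ℂ →ₗ[ℝ] Matrix (Fin N) (Fin N) ℂ where
  toFun Y := Cᴴ * Y
  map_add' Y Z := by simp [Matrix.mul_add]
  map_smul' r Y := by simp [Matrix.mul_smul]

open scoped ComplexOrder in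
lemma lmulCH_surjective {T N : ℕ} (C : Matrix (Fin T) (Fin N) ℂ)
    (hrank : C.rank = N) : Function.Surjective (lmulCH C) := by
  have hr : (Cᴴ).rank = N := by rw [Matrix.rank_conjTranspose, hrank]
  have htop : LinearMap.range (Cᴴ.mulVecLin) = ⊤ := by
    apply Submodule.eq_top_of_finrank_eq
    rw [← Matrix.rank, hr, Module.finrank_pi]
    simp
  have hsurj : Function.Surjective (Cᴴ.mulVecLin) :=
    LinearMap.range_eq_top.mp htop
  intro B
  choose y hy using fun j => hsurj (fun i => B i j)
  refine ⟨Matrix.of fun t j => y j t, ?_⟩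
  ext i j
  have := congrFun (hy j) i
  simpa [lmulCH, Matrix.mul_apply, Matrix.mulVec, dotProduct] using this

lemma qocMap_eq {T N : ℕ} (C : Matrix (Fin T) (Fin N) ℂ) :
    qocMap C = (addAdjMap N).comp (lmulCH C) := by
  refine LinearMap.ext fun Y => ?_
  show Cᴴ * Y + Yᴴ * C = (Cᴴ * Y) + (Cᴴ * Y)ᴴ
  rw [Matrix.conjTranspose_mul, Matrix.conjTranspose_conjTranspose]

/-- If `T ≥ N` and `C` has full column rank `N`, then the real linear system
`Cᴴ Y + Yᴴ C = 0` has rank `N²` (full row rank), and consequently its real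
solution space has dimension `2TN - N²`. -/
theorem stmt5 (T N : ℕ) (hTN : N ≤ T) (C : Matrix (Fin T) (Fin N) ℂ)
    (hrank : C.rank = N) :
    Module.finrank ℝ (LinearMap.range (qocMap C)) = N ^ 2 ∧
    Module.finrank ℝ (LinearMap.ker (qocMap C)) = 2 * T * N - N ^ 2 := by
  have hrange : LinearMap.range (qocMap C) = LinearMap.range (addAdjMap N) := by
    rw [qocMap_eq, LinearMap.range_comp_of_range_eq_top]
    exact LinearMap.range_eq_top.mpr (lmulCH_surjective C hrank)
  have h1 : Module.finrank ℝ (LinearMap.range (qocMap C)) = N ^ 2 := by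
    rw [hrange, finrank_range_addAdjMap]
  refine ⟨h1, ?_⟩
  have h2 := LinearMap.finrank_range_add_finrank_ker (qocMap C)
  have h3 : Module.finrank ℝ (Matrix (Fin T) (Fin N) ℂ) = T * N * 2 := by
    rw [Module.finrank_matrix, Complex.finrank_real_complex]
    simp
  rw [h1, h3] at h2
  have hNN : N * N ≤ T * N := Nat.mul_le_mul_right N hTN
  have h4 : 2 * T * N = T * N * 2 := by ring
  rw [sq] at h2 ⊢
  omega
end

section
/- Let C be a complex T×N matrix with T < N of the form C = [C_sub 0], where C_sub is T×T with rank(C_sub) = T. Then the real vector space of T×N complex matrices Y satisfying C^H Y + Y^H C = 0 (viewed as a real vector space under entrywise real/imaginary coordinates) has dimension exactly T². -/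
/-!
Writing `C = C_sub * P` with `P = [1 0]`, so that `P * Pᴴ = 1`, the map `Y ↦ C_subᴴ * Y` is a
real-linear automorphism carrying the solution space of `C` onto that of `P`. For `P`,
multiplying `Pᴴ * Y + Yᴴ * P = 0` on the left by `P` (and then on the right by `Pᴴ`) shows
that the solutions are exactly the matrices `B * P` with `B = Y * Pᴴ` skew-Hermitian.
Multiplication by `i` exchanges the Hermitian and skew-Hermitian matrices, and together they
span all `T × T` complex matrices, so the skew-Hermitian ones have real dimension
`2 T² / 2 = T²`.
-/

open Matrix

section ComplexStarModule

variable {A : Type*} [AddCommGroup A] [Module ℂ A] [StarAddMonoid A] [StarModule ℂ A]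

noncomputable def skewAdjointEquivSelfAdjoint : skewAdjoint A ≃ₗ[ℝ] selfAdjoint A :=
  LinearEquiv.ofBijective skewAdjoint.negISMul
    ⟨fun a b h => Subtype.ext <| by
      rw [← skewAdjoint.I_smul_neg_I a, ← skewAdjoint.I_smul_neg_I b, h],
     fun s => ⟨⟨Complex.I • (s : A), by simp⟩, by ext; simp [smul_smul]⟩⟩

theorem finrank_eq_two_mul_finrank_skewAdjoint [FiniteDimensional ℝ A] :
    Module.finrank ℝ A = 2 * Module.finrank ℝ (skewAdjoint.submodule ℝ A) := by
  have : Module.Finite ℝ (skewAdjoint A) :=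
    inferInstanceAs (Module.Finite ℝ (skewAdjoint.submodule ℝ A))
  have : Module.Finite ℝ (selfAdjoint A) :=
    inferInstanceAs (Module.Finite ℝ (selfAdjoint.submodule ℝ A))
  rw [(StarModule.decomposeProdAdjoint ℝ A).finrank_eq, Module.finrank_prod,
    ← skewAdjointEquivSelfAdjoint.finrank_eq, two_mul]
  rfl

end ComplexStarModule

theorem finrank_skewAdjoint_matrix (n : Type*) [Fintype n] [DecidableEq n] :
    Module.finrank ℝ (skewAdjoint.submodule ℝ (Matrix n n ℂ)) = Fintype.card n ^ 2 := by
  have h := finrank_eq_two_mul_finrank_skewAdjoint (A := Matrix n n ℂ)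
  rw [Module.finrank_matrix, Complex.finrank_real_complex] at h
  rw [sq]
  linarith

theorem isUnit_of_rank_eq_card {n K : Type*} [Fintype n] [DecidableEq n] [Field K]
    {A : Matrix n n K} (h : A.rank = Fintype.card n) : IsUnit A := by
  have hrange : LinearMap.range A.mulVecLin = ⊤ :=
    Submodule.eq_top_of_finrank_eq (by rwa [Module.finrank_fintype_fun_eq_card])
  exact mulVec_surjective_iff_isUnit.mp (LinearMap.range_eq_top.mp hrange)

def unitsMulLeftLinearEquiv {m n R α : Type*} [Fintype m] [DecidableEq m] [Semiring R]
    [Semiring α] [Module R α] [SMulCommClass R α α] (u : (Matrix m m α)ˣ) :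
    Matrix m n α ≃ₗ[R] Matrix m n α where
  __ := mulLeftLinearMap n R (u : Matrix m m α)
  invFun Y := (↑u⁻¹ : Matrix m m α) * Y
  left_inv Y := by simp [← Matrix.mul_assoc]
  right_inv Y := by simp [← Matrix.mul_assoc]

theorem submatrix_one_mul_conjTranspose {m n α : Type*} [Fintype n] [DecidableEq m]
    [DecidableEq n] [NonAssocSemiring α] [StarRing α] {e : m → n} (he : Function.Injective e) :
    (1 : Matrix n n α).submatrix e id * ((1 : Matrix n n α).submatrix e id)ᴴ = 1 := by
  rw [conjTranspose_submatrix, conjTranspose_one, ← submatrix_mul _ _ _ _ _ Function.bijective_id,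
    Matrix.one_mul, submatrix_one _ he]

theorem mul_submatrix_one_castLE_apply {T N : ℕ} {α : Type*} [NonAssocSemiring α] (hle : T ≤ N)
    (A : Matrix (Fin T) (Fin T) α) (t : Fin T) (n : Fin N) :
    (A * (1 : Matrix (Fin N) (Fin N) α).submatrix (Fin.castLE hle) id) t n =
      if h : (n : ℕ) < T then A t ⟨n, h⟩ else 0 := by
  simp only [mul_apply, submatrix_apply, id_eq, one_apply, mul_ite, mul_one, mul_zero]
  split_ifs with hn
  · have hcast (k : Fin T) : Fin.castLE hle k = n ↔ k = ⟨n, hn⟩ := by simp [Fin.ext_iff]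
    simp [hcast]
  · exact Finset.sum_eq_zero fun k _ => if_neg fun hk => hn (by rw [← hk]; exact k.2)

section qocMap

variable {T N : ℕ}

theorem qocMap_mul_apply (A : Matrix (Fin T) (Fin T) ℂ) (C : Matrix (Fin T) (Fin N) ℂ)
    (Y : Matrix (Fin T) (Fin N) ℂ) : qocMap (A * C) Y = qocMap C (Aᴴ * Y) := by
  simp [qocMap, conjTranspose_mul, Matrix.mul_assoc]

theorem finrank_ker_qocMap_mul {A : Matrix (Fin T) (Fin T) ℂ} (hA : IsUnit A)
    (C : Matrix (Fin T) (Fin N) ℂ) :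
    Module.finrank ℝ (LinearMap.ker (qocMap (A * C))) =
      Module.finrank ℝ (LinearMap.ker (qocMap C)) := by
  set e : Matrix (Fin T) (Fin N) ℂ ≃ₗ[ℝ] Matrix (Fin T) (Fin N) ℂ :=
    unitsMulLeftLinearEquiv ((isUnit_conjTranspose A).mpr hA).unit
  have hker : LinearMap.ker (qocMap (A * C)) = (LinearMap.ker (qocMap C)).comap e.toLinearMap := by
    ext Y
    simp [qocMap_mul_apply, e, unitsMulLeftLinearEquiv]
  rw [hker, Submodule.comap_equiv_eq_map_symm, LinearEquiv.finrank_map_eq]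

theorem ker_qocMap_of_mul_conjTranspose_eq_one {P : Matrix (Fin T) (Fin N) ℂ}
    (hP : P * Pᴴ = 1) :
    LinearMap.ker (qocMap P) =
      (skewAdjoint.submodule ℝ (Matrix (Fin T) (Fin T) ℂ)).map
        (mulRightLinearMap (Fin T) ℝ P) := by
  ext Y
  simp only [LinearMap.mem_ker, Submodule.mem_map, mulRightLinearMap_apply]
  constructor
  · intro (hY : Pᴴ * Y + Yᴴ * P = 0)
    have hPY : Y + P * Yᴴ * P = 0 := by
      simpa [Matrix.mul_add, ← Matrix.mul_assoc, hP] using congrArg (P * ·) hY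
    have hskew : P * Yᴴ = -(Y * Pᴴ) := by
      have := congrArg (· * Pᴴ) hPY
      simp only [Matrix.add_mul, Matrix.mul_assoc, hP, Matrix.mul_one, Matrix.zero_mul] at this
      exact eq_neg_of_add_eq_zero_right this
    refine ⟨Y * Pᴴ, ?_, ?_⟩
    · show Y * Pᴴ ∈ skewAdjoint _
      rwa [skewAdjoint.mem_iff, star_eq_conjTranspose, conjTranspose_mul,
        conjTranspose_conjTranspose]
    · rw [← neg_neg (Y * Pᴴ), ← hskew, Matrix.neg_mul]
      exact (eq_neg_of_add_eq_zero_left hPY).symm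
  · rintro ⟨B, hB : Bᴴ = -B, rfl⟩
    show Pᴴ * (B * P) + (B * P)ᴴ * P = 0
    rw [conjTranspose_mul, hB, Matrix.mul_assoc, Matrix.neg_mul, Matrix.mul_neg,
      ← Matrix.mul_assoc]
    exact add_neg_cancel _

theorem finrank_ker_qocMap_of_mul_conjTranspose_eq_one {P : Matrix (Fin T) (Fin N) ℂ}
    (hP : P * Pᴴ = 1) : Module.finrank ℝ (LinearMap.ker (qocMap P)) = T ^ 2 := by
  have hinj : Function.Injective (mulRightLinearMap (Fin T) ℝ P) := fun B B' h => by
    simpa [Matrix.mul_assoc, hP] using congrArg (· * Pᴴ) h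
  rw [ker_qocMap_of_mul_conjTranspose_eq_one hP,
    (Submodule.equivMapOfInjective _ hinj _).finrank_eq.symm, finrank_skewAdjoint_matrix,
    Fintype.card_fin]

end qocMap

/-- If `T < N` and `C = [C_sub 0]` with `C_sub` an invertible (rank `T`) `T×T`
block, then the real solution space of `Cᴴ Y + Yᴴ C = 0` has dimension exactly `T²`. -/
theorem stmt6 (T N : ℕ) (hTN : T < N) (Csub : Matrix (Fin T) (Fin T) ℂ)
    (hrank : Csub.rank = T) (C : Matrix (Fin T) (Fin N) ℂ)
    (hC : ∀ t n, C t n = if h : (n : ℕ) < T then Csub t ⟨n, h⟩ else 0) :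
    Module.finrank ℝ (LinearMap.ker (qocMap C)) = T ^ 2 := by
  have hfactor : C = Csub * (1 : Matrix (Fin N) (Fin N) ℂ).submatrix (Fin.castLE hTN.le) id := by
    ext t n
    rw [hC, mul_submatrix_one_castLE_apply]
  rw [hfactor, finrank_ker_qocMap_mul (isUnit_of_rank_eq_card (by rwa [Fintype.card_fin])),
    finrank_ker_qocMap_of_mul_conjTranspose_eq_one
      (submatrix_one_mul_conjTranspose (Fin.castLE_injective _))]
end

section
/- Let {A_1; A_2,...,A_L} and {B_1; B_2,...,B_L} be two families of complex (T/2)×N matrices such that A_1^H A_l = -A_l^H A_1 and B_1^H B_l = -B_l^H B_1 for l = 2,...,L. Fix i, k ∈ {2,...,L}. Define the stacked T×N matrices U_1 = [A_2; B_1], ..., U_{L-1} = [A_L; B_1], U_L = [A_i; -B_1], and V_1 = [A_1; B_2], ..., V_{L-1} = [A_1; B_L], V_L = [-A_1; B_k]. Then every U_p satisfies the quasi-orthogonality constraint with every V_q: U_p^H V_q = -V_q^H U_p. -/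
/-!
Since `[X; Y]ᴴ [X'; Y'] = Xᴴ X' + Yᴴ Y'`, two stacked matrices are quasi-orthogonal as soon as
their top blocks and their bottom blocks are; and quasi-orthogonality is symmetric and survives
negating either matrix.
-/

open Matrix

/-- Vertical concatenation of two `T×N` matrices into a `2T×N` matrix. -/
def vcat {T N : ℕ} (X Y : Matrix (Fin T) (Fin N) ℂ) :
    Matrix (Fin T ⊕ Fin T) (Fin N) ℂ :=
  Matrix.of (fun r n => Sum.elim (fun t => X t n) (fun t => Y t n) r)

/-- The quasi-orthogonality constraint between `P` and `Q`. -/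
def QOC {m n : Type*} [Fintype m] (P Q : Matrix m n ℂ) : Prop :=
  Pᴴ * Q = -(Qᴴ * P)

lemma conjTranspose_vcat_mul_vcat {T N : ℕ} (X Y X' Y' : Matrix (Fin T) (Fin N) ℂ) :
    (vcat X Y)ᴴ * vcat X' Y' = Xᴴ * X' + Yᴴ * Y' := by
  ext a b
  simp [vcat, mul_apply, conjTranspose_apply, Fintype.sum_sum_type]

namespace QOC

variable {m n : Type*} [Fintype m] {P Q : Matrix m n ℂ}

lemma symm (h : QOC P Q) : QOC Q P := by
  rw [QOC, h, neg_neg]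

lemma neg_left (h : QOC P Q) : QOC (-P) Q := by
  rw [QOC, conjTranspose_neg, Matrix.neg_mul, h, Matrix.mul_neg]

lemma neg_right (h : QOC P Q) : QOC P (-Q) :=
  (h.symm.neg_left).symm

lemma vcat {T N : ℕ} {X Y X' Y' : Matrix (Fin T) (Fin N) ℂ}
    (hX : QOC X X') (hY : QOC Y Y') : QOC (vcat X Y) (vcat X' Y') := by
  rw [QOC, conjTranspose_vcat_mul_vcat, conjTranspose_vcat_mul_vcat, hX, hY, neg_add]

end QOC

/-- Balanced construction: if `A 0` is quasi-orthogonal to every `A l` (`l ≠ 0`)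
and `B 0` to every `B m` (`m ≠ 0`), then every stacked matrix
`U ∈ {[A l; B 0] : l ≠ 0} ∪ {[A i; -B 0]}` is quasi-orthogonal to every
`V ∈ {[A 0; B m] : m ≠ 0} ∪ {[-A 0; B k]}`. -/
theorem stmt10 (T N L : ℕ) (A B : Fin (L + 1) → Matrix (Fin T) (Fin N) ℂ)
    (hA : ∀ l, l ≠ 0 → QOC (A 0) (A l))
    (hB : ∀ m, m ≠ 0 → QOC (B 0) (B m))
    (i k : Fin (L + 1)) (hi : i ≠ 0) (hk : k ≠ 0) :
    (∀ l, l ≠ 0 → ∀ m, m ≠ 0 →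
        QOC (vcat (A l) (B 0)) (vcat (A 0) (B m))) ∧
    (∀ l, l ≠ 0 → QOC (vcat (A l) (B 0)) (vcat (-(A 0)) (B k))) ∧
    (∀ m, m ≠ 0 → QOC (vcat (A i) (-(B 0))) (vcat (A 0) (B m))) ∧
    QOC (vcat (A i) (-(B 0))) (vcat (-(A 0)) (B k)) :=
  ⟨fun l hl m hm => (hA l hl).symm.vcat (hB m hm),
    fun l hl => (hA l hl).symm.neg_right.vcat (hB k hk),
    fun m hm => (hA i hi).symm.vcat (hB m hm).neg_left,
    (hA i hi).symm.neg_right.vcat (hB k hk).neg_left⟩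
end

section
/- With the hypotheses of the balanced construction: if A_2, ..., A_L are real-linearly independent matrices, B_1 ≠ 0, and i ∈ {2,...,L}, then the T×N stacked matrices U_1 = [A_2; B_1], ..., U_{L-1} = [A_L; B_1], U_L = [A_i; -B_1] are real-linearly independent. -/
/-!
Projecting onto the top blocks shows that the stacked matrices `[A l; B₁]` are independent.
If `[A i; -B₁]` were in their span, independence of the `A l` would force the only possible
combination to be `[A i; B₁]` itself, whence `B₁ = -B₁` and `B₁ = 0`.
-/

open Matrix

open Submodule in
theorem LinearIndependent.sumElim_prod_neg {ι K M M' : Type*} [DivisionRing K]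
    [AddCommGroup M] [Module K M] [AddCommGroup M'] [Module K M'] [IsAddTorsionFree M']
    {v : ι → M} (hv : LinearIndependent K v) {b : M'} (hb : b ≠ 0) (i : ι) :
    LinearIndependent K (Sum.elim (fun l => (v l, b)) (fun _ : Unit => (v i, -b))) := by
  refine linearIndependent_sum.mpr ⟨.of_comp (LinearMap.fst K M M') hv,
    linearIndependent_unique_iff.mpr fun h => hb (neg_eq_zero.mp congr($h.2)), ?_⟩
  simp only [Sum.elim_comp_inl, Sum.elim_comp_inr, Set.range_const]
  rw [disjoint_span_singleton]
  intro hmem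
  obtain ⟨c, hc⟩ :
      (v i, -b) ∈ LinearMap.range (Finsupp.linearCombination K fun l => (v l, b)) := by
    rwa [Finsupp.range_linearCombination]
  have hc_single : c = Finsupp.single i 1 := by
    apply hv
    simpa [Finsupp.apply_linearCombination, Function.comp_def] using
      congr(LinearMap.fst K M M' $hc)
  subst hc_single
  simp only [Finsupp.linearCombination_single, one_smul, Prod.mk.injEq, true_and] at hc
  exact absurd (self_eq_neg.mp hc) hb

/-- If `A l` (`l ≠ 0`) are real-linearly independent and `B₁ ≠ 0`, then the
stacked matrices `[A l; B₁]` (`l ≠ 0`) together with `[A i; -B₁]` are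
real-linearly independent. -/
theorem stmt11 (T N L : ℕ) (A : Fin (L + 1) → Matrix (Fin T) (Fin N) ℂ)
    (B1 : Matrix (Fin T) (Fin N) ℂ)
    (hA : LinearIndependent ℝ (fun l : {l : Fin (L + 1) // l ≠ 0} => A l))
    (hB1 : B1 ≠ 0) (i : Fin (L + 1)) (hi : i ≠ 0) :
    LinearIndependent ℝ
      (Sum.elim (fun l : {l : Fin (L + 1) // l ≠ 0} => vcat (A l) B1)
        (fun _ : Unit => vcat (A i) (-B1))) := by
  have : IsAddTorsionFree (Matrix (Fin T) (Fin N) ℂ) :=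
    inferInstanceAs (IsAddTorsionFree (Fin T → Fin N → ℂ))
  let splitRows : Matrix (Fin T ⊕ Fin T) (Fin N) ℂ →ₗ[ℝ]
      Matrix (Fin T) (Fin N) ℂ × Matrix (Fin T) (Fin N) ℂ :=
    (LinearMap.funLeft ℝ _ Sum.inl).prod (LinearMap.funLeft ℝ _ Sum.inr)
  refine .of_comp splitRows ?_
  rw [Sum.comp_elim]
  exact hA.sumElim_prod_neg hB1 ⟨i, hi⟩
end
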